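/- arXiv:2405.19217 — 3 statements merged into one kernel-verified Lean document; each statement's English description precedes it below -/
import Mathlib

section
/- Let p be a prime, t a positive integer, and x₁, …, x_t pairwise distinct nonzero elements of ZMod p. Fix any secret s ∈ ZMod p, let a₁, …, a_t be independent uniformly distributed random elements of ZMod p, and set f(X) = s + a₁X + ⋯ + a_tX^t. Then the random vector (f(x₁), …, f(x_t)) is uniformly distributed on (ZMod p)^t; in particular its distribution does not depend on s. -/
lemma pmf_map_uniform_of_bijective {α : Type*} [Fintype α] [Nonempty α] [DecidableEq α]
    {f : α → α} (hf : Function.Bijective f) :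
    (PMF.uniformOfFintype α).map f = PMF.uniformOfFintype α := by
  ext b
  obtain ⟨a₀, rfl⟩ := hf.surjective b
  rw [PMF.map_apply, tsum_eq_single a₀]
  · simp
  · intro a ha
    rw [if_neg]
    exact fun h => ha (hf.injective h.symm)

/-- Shamir secret sharing hides the secret: if the coefficients `a₁, …, a_t` of
`f(X) = s + a₁ X + ⋯ + a_t X^t` are independent and uniform over `ZMod p`, then the vector of
shares `(f(x₁), …, f(x_t))` at pairwise distinct nonzero points is uniform on `(ZMod p)^t`;
in particular its distribution does not depend on the secret `s`. -/
theorem shamir_shares_uniform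
    (p : ℕ) [Fact p.Prime] (t : ℕ) (ht : 0 < t)
    (x : Fin t → ZMod p) (hx : Function.Injective x) (hx0 : ∀ i, x i ≠ 0)
    (s : ZMod p) :
    (PMF.uniformOfFintype (Fin t → ZMod p)).map
        (fun a => fun i => s + ∑ ℓ : Fin t, a ℓ * x i ^ ((ℓ : ℕ) + 1))
      = PMF.uniformOfFintype (Fin t → ZMod p) := by
  apply pmf_map_uniform_of_bijective
  set M : Matrix (Fin t) (Fin t) (ZMod p) :=
    Matrix.of (fun i ℓ => x i ^ ((ℓ : ℕ) + 1)) with hM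
  have hMdet : IsUnit M.det := by
    have hdiag : M = Matrix.diagonal x * Matrix.vandermonde x := by
      ext i j
      simp [hM, Matrix.vandermonde, Matrix.mul_apply, Matrix.diagonal_apply, pow_succ',
        Finset.sum_ite_eq, mul_comm]
    rw [hdiag, Matrix.det_mul, Matrix.det_diagonal]
    refine (IsUnit.mul_iff).2 ⟨?_, ?_⟩
    · exact isUnit_iff_ne_zero.2 (Finset.prod_ne_zero_iff.2 fun i _ => hx0 i)
    · exact isUnit_iff_ne_zero.2 (Matrix.det_vandermonde_ne_zero_iff.2 hx)
  have hinj : Function.Injective M.mulVec := Matrix.mulVec_injective_iff_isUnit.2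
    (Matrix.isUnit_iff_isUnit_det _ |>.2 hMdet)
  have key : (fun a => fun i => s + ∑ ℓ : Fin t, a ℓ * x i ^ ((ℓ : ℕ) + 1))
      = (fun v : Fin t → ZMod p => fun i => s + v i) ∘ M.mulVec := by
    funext a
    funext i
    simp [Matrix.mulVec, dotProduct, hM, mul_comm]
  rw [key]
  refine Function.Bijective.comp ?_ (Function.Injective.bijective_of_finite hinj)
  exact Function.Injective.bijective_of_finite fun a b h => by
    funext i; have := congrFun h i; simpa using this
end

section
/- Let p be a prime and let α and β be independent uniformly distributed random elements of ZMod p. For all x, x' ∈ ZMod p with x ≠ x' and every function φ : ZMod p → ZMod p, the probability that α·x' + β = φ(α·x + β) is exactly 1/p. -/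
/-- One-time MAC forgery probability: with a uniformly random key `(α, β) ∈ (ZMod p)²`, for any
`x ≠ x'` and any forging strategy `φ` (mapping the observed tag of `x` to a candidate tag for
`x'`), the probability that `α·x' + β = φ(α·x + β)` is exactly `1/p`. -/
theorem one_time_mac_forgery_probability
    (p : ℕ) [Fact p.Prime] (x x' : ZMod p) (hxx : x ≠ x')
    (φ : ZMod p → ZMod p) :
    (PMF.uniformOfFintype (ZMod p × ZMod p)).toOuterMeasure
        {k : ZMod p × ZMod p | k.1 * x' + k.2 = φ (k.1 * x + k.2)} = 1 / p := by
  have hp : (p : ℕ).Prime := Fact.out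
  have hd : x' - x ≠ 0 := sub_ne_zero.mpr (Ne.symm hxx)
  set S : Set (ZMod p × ZMod p) :=
    {k : ZMod p × ZMod p | k.1 * x' + k.2 = φ (k.1 * x + k.2)} with hS
  have e : S ≃ ZMod p :=
    { toFun := fun k => k.1.1 * x + k.1.2
      invFun := fun t => ⟨((φ t - t) * (x' - x)⁻¹, t - (φ t - t) * (x' - x)⁻¹ * x), by
        simp only [hS, Set.mem_setOf_eq]
        have : (φ t - t) * (x' - x)⁻¹ * x + (t - (φ t - t) * (x' - x)⁻¹ * x) = t := by ring
        rw [this]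
        field_simp
        ring⟩
      left_inv := by
        rintro ⟨⟨a, b⟩, hk⟩
        simp only [hS, Set.mem_setOf_eq] at hk
        have ha : a = (φ (a * x + b) - (a * x + b)) * (x' - x)⁻¹ := by
          field_simp
          linear_combination hk
        ext
        · exact ha.symm
        · simp only
          rw [← ha]; ring
      right_inv := fun t => by simp only; ring }
  rw [PMF.toOuterMeasure_uniformOfFintype_apply]
  have hcard : Fintype.card S = p := by
    rw [Fintype.card_eq_nat_card, Nat.card_congr e, Nat.card_eq_fintype_card, ZMod.card]
  rw [Fintype.card_eq_nat_card, ← Fintype.card_eq_nat_card (α := S), hcard]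
  have : Fintype.card (ZMod p × ZMod p) = p * p := by
    simp [ZMod.card]
  rw [this]
  have hp0 : (p : ENNReal) ≠ 0 := Nat.cast_ne_zero.mpr hp.ne_zero
  have hptop : (p : ENNReal) ≠ ⊤ := ENNReal.natCast_ne_top p
  push_cast
  rw [ENNReal.div_eq_div_iff hp0 hptop (mul_ne_zero hp0 hp0) (ENNReal.mul_ne_top hptop hptop)]
  ring
end

section
/- Let p be a prime, d a positive integer, σ₁, σ₁' nonzero elements of ZMod p, and σ₂, σ₂' vectors in (ZMod p)^d with σ₁⁻¹·σ₂ = σ₁'⁻¹·σ₂'. Let λ be uniformly distributed on ZMod p. Then the distribution of (λ·σ₁, λ·σ₂) equals the distribution of (λ·σ₁', λ·σ₂'); that is, the pushforward of the uniform distribution on ZMod p under λ ↦ (λσ₁, λσ₂) depends on (σ₁, σ₂) only through the ratio σ₁⁻¹·σ₂. -/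
lemma uniform_map_equiv {α : Type*} [Fintype α] [Nonempty α] (e : α ≃ α) :
    (PMF.uniformOfFintype α).map e = PMF.uniformOfFintype α := by
  ext x
  classical
  rw [PMF.map_apply, tsum_eq_single (e.symm x)]
  · simp
  · intro b hb
    simp only [PMF.uniformOfFintype_apply]
    rw [if_neg]
    intro h
    exact hb (by rw [h, Equiv.symm_apply_apply])

/-- Masking with a uniform `λ` reveals only the quotient: if `σ₁⁻¹ • σ₂ = σ₁'⁻¹ • σ₂'` for
nonzero `σ₁, σ₁'`, then the distribution of `(λ·σ₁, λ·σ₂)` for uniform `λ` equals the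
distribution of `(λ·σ₁', λ·σ₂')`. -/
theorem masked_quotient_privacy
    (p : ℕ) [Fact p.Prime] (d : ℕ) (hd : 0 < d)
    (σ₁ σ₁' : ZMod p) (h₁ : σ₁ ≠ 0) (h₁' : σ₁' ≠ 0)
    (σ₂ σ₂' : Fin d → ZMod p)
    (hratio : σ₁⁻¹ • σ₂ = σ₁'⁻¹ • σ₂') :
    (PMF.uniformOfFintype (ZMod p)).map (fun lam => (lam * σ₁, lam • σ₂))
      = (PMF.uniformOfFintype (ZMod p)).map (fun lam => (lam * σ₁', lam • σ₂')) := by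
  have hc : (σ₁ * σ₁'⁻¹ : ZMod p) ≠ 0 := mul_ne_zero h₁ (inv_ne_zero h₁')
  let e : ZMod p ≃ ZMod p := Equiv.mulRight₀ (σ₁ * σ₁'⁻¹) hc
  have key : (fun lam : ZMod p => (lam * σ₁, lam • σ₂))
      = (fun mu : ZMod p => (mu * σ₁', mu • σ₂')) ∘ e := by
    funext lam
    have he : (e lam) = lam * (σ₁ * σ₁'⁻¹) := rfl
    simp only [Function.comp_apply, he]
    refine Prod.ext ?_ ?_
    · field_simp
    · funext i
      have h2 : σ₂ i = σ₁ * (σ₁'⁻¹ * σ₂' i) := by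
        have := congrFun hratio i
        simp only [Pi.smul_apply, smul_eq_mul] at this
        field_simp at this ⊢
        linear_combination this
      simp only [Pi.smul_apply, smul_eq_mul, h2]
      ring
  rw [key, ← PMF.map_comp, uniform_map_equiv]
end
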